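/- For any N ≥ 2, in gl(N) the element r_j = H_{1N} ∧ E_{1N} + 2 Σ_{k=2}^{N-1} E_{1k} ∧ E_{kN}, where H_{1N} = E_{11} - E_{NN}, satisfies the classical Yang–Baxter equation [r_{12}, r_{13}] + [r_{12}, r_{23}] + [r_{13}, r_{23}] = 0. -/

import Mathlib

/- STATEMENT 4: For any N ≥ 2, in gl(N) the jordanian element
r_j = H_{1N} ∧ E_{1N} + 2 Σ_{k=2}^{N-1} E_{1k} ∧ E_{kN},  H_{1N} = E_{11} - E_{NN},
satisfies the classical Yang–Baxter equation
[r₁₂,r₁₃] + [r₁₂,r₂₃] + [r₁₃,r₂₃] = 0 in U(gl(N))^{⊗3}. -/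

open scoped TensorProduct

attribute [local instance 100] LieRing.ofAssociativeRing

noncomputable section

variable (N : ℕ)

abbrev glN (N : ℕ) := Matrix (Fin N) (Fin N) ℚ
abbrev UN (N : ℕ) := UniversalEnvelopingAlgebra ℚ (glN N)

noncomputable def ιN : glN N → UN N := fun a => UniversalEnvelopingAlgebra.ι ℚ a

noncomputable def p12 : UN N ⊗[ℚ] UN N →ₐ[ℚ] (UN N ⊗[ℚ] UN N) ⊗[ℚ] UN N :=
  Algebra.TensorProduct.includeLeft

noncomputable def p13 : UN N ⊗[ℚ] UN N →ₐ[ℚ] (UN N ⊗[ℚ] UN N) ⊗[ℚ] UN N :=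
  Algebra.TensorProduct.map Algebra.TensorProduct.includeLeft (AlgHom.id ℚ (UN N))

noncomputable def p23 : UN N ⊗[ℚ] UN N →ₐ[ℚ] (UN N ⊗[ℚ] UN N) ⊗[ℚ] UN N :=
  Algebra.TensorProduct.map Algebra.TensorProduct.includeRight (AlgHom.id ℚ (UN N))

/-- a ∧ b = a ⊗ b - b ⊗ a in U(gl(N)) ⊗ U(gl(N)) -/
noncomputable def wedge (a b : glN N) : UN N ⊗[ℚ] UN N :=
  ιN N a ⊗ₜ[ℚ] ιN N b - ιN N b ⊗ₜ[ℚ] ιN N a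

/-! With h = H_{1N}, e = E_{1N}, a_k = E_{1k}, b_k = E_{kN}, the only brackets that matter are
[h, e] = 2e, [h, a_k] = a_k, [h, b_k] = b_k, [a_k, b_l] = δ_{kl} e, all others among e, a_k, b_k
being zero. The left-hand side of the CYBE is B(r, r) for the bilinear form
B(u, v) = [u₁₂, v₁₃] + [u₁₂, v₂₃] + [u₁₃, v₂₃]. Expanding r = h ∧ e + 2 Σ a_k ∧ b_k:
B(a_k ∧ b_k, a_l ∧ b_l) = 0 for k ≠ l because all four elements commute, B(h ∧ e, h ∧ e) = 0
because h and e span a two-dimensional Lie algebra, and for each k the three remaining terms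
B(h ∧ e, a_k ∧ b_k) + B(a_k ∧ b_k, h ∧ e) + 2 B(a_k ∧ b_k, a_k ∧ b_k) cancel. -/

structure IsJordanianFamily {M κ : Type*} [LieRing M] (S : Finset κ) (h e : M) (a b : κ → M) :
    Prop where
  lie_h_e : ⁅h, e⁆ = 2 • e
  lie_h_a : ∀ k ∈ S, ⁅h, a k⁆ = a k
  lie_h_b : ∀ k ∈ S, ⁅h, b k⁆ = b k
  lie_e_a : ∀ k ∈ S, ⁅e, a k⁆ = 0
  lie_e_b : ∀ k ∈ S, ⁅e, b k⁆ = 0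
  lie_a_b_self : ∀ k ∈ S, ⁅a k, b k⁆ = e
  lie_a_b_of_ne : ∀ k ∈ S, ∀ l ∈ S, k ≠ l → ⁅a k, b l⁆ = 0
  lie_a_a : ∀ k ∈ S, ∀ l ∈ S, ⁅a k, a l⁆ = 0
  lie_b_b : ∀ k ∈ S, ∀ l ∈ S, ⁅b k, b l⁆ = 0

namespace IsJordanianFamily

variable {R κ : Type*} [CommRing R] {S : Finset κ}

theorem map {L M : Type*} [LieRing L] [LieAlgebra R L] [LieRing M] [LieAlgebra R M]
    {h e : L} {a b : κ → L} (hJ : IsJordanianFamily S h e a b) (f : L →ₗ⁅R⁆ M) :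
    IsJordanianFamily S (f h) (f e) (fun k => f (a k)) (fun k => f (b k)) where
  lie_h_e := by rw [← f.map_lie, hJ.lie_h_e, map_nsmul]
  lie_h_a k hk := by rw [← f.map_lie, hJ.lie_h_a k hk]
  lie_h_b k hk := by rw [← f.map_lie, hJ.lie_h_b k hk]
  lie_e_a k hk := by rw [← f.map_lie, hJ.lie_e_a k hk, map_zero]
  lie_e_b k hk := by rw [← f.map_lie, hJ.lie_e_b k hk, map_zero]
  lie_a_b_self k hk := by rw [← f.map_lie, hJ.lie_a_b_self k hk]
  lie_a_b_of_ne k hk l hl hkl := by rw [← f.map_lie, hJ.lie_a_b_of_ne k hk l hl hkl, map_zero]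
  lie_a_a k hk l hl := by rw [← f.map_lie, hJ.lie_a_a k hk l hl, map_zero]
  lie_b_b k hk l hl := by rw [← f.map_lie, hJ.lie_b_b k hk l hl, map_zero]

end IsJordanianFamily

namespace TensorProduct

variable {R A κ : Type*} [CommRing R] [Ring A] [Algebra R A]

section
variable (R A)

def incl₁₂ : A ⊗[R] A →ₐ[R] (A ⊗[R] A) ⊗[R] A :=
  Algebra.TensorProduct.includeLeft

def incl₁₃ : A ⊗[R] A →ₐ[R] (A ⊗[R] A) ⊗[R] A :=
  Algebra.TensorProduct.map Algebra.TensorProduct.includeLeft (AlgHom.id R A)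

def incl₂₃ : A ⊗[R] A →ₐ[R] (A ⊗[R] A) ⊗[R] A :=
  Algebra.TensorProduct.map Algebra.TensorProduct.includeRight (AlgHom.id R A)

end

def cybeBilin : A ⊗[R] A →ₗ[R] A ⊗[R] A →ₗ[R] (A ⊗[R] A) ⊗[R] A :=
  LinearMap.mk₂ R
    (fun u v => ⁅incl₁₂ R A u, incl₁₃ R A v⁆ + ⁅incl₁₂ R A u, incl₂₃ R A v⁆ +
      ⁅incl₁₃ R A u, incl₂₃ R A v⁆)
    (fun _ _ _ => by simp only [map_add, add_lie]; abel)
    (fun _ _ _ => by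
      simp only [map_smul, Ring.lie_def, smul_mul_assoc, mul_smul_comm, smul_sub, smul_add])
    (fun _ _ _ => by simp only [map_add, lie_add]; abel)
    (fun _ _ _ => by
      simp only [map_smul, Ring.lie_def, smul_mul_assoc, mul_smul_comm, smul_sub, smul_add])

theorem cybeBilin_tmul (x y x' y' : A) :
    cybeBilin (x ⊗ₜ[R] y) (x' ⊗ₜ[R] y') =
      (⁅x, x'⁆ ⊗ₜ[R] y) ⊗ₜ[R] y' + (x ⊗ₜ[R] ⁅y, x'⁆) ⊗ₜ[R] y' + (x ⊗ₜ[R] x') ⊗ₜ[R] ⁅y, y'⁆ := by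
  simp only [cybeBilin, incl₁₂, incl₁₃, incl₂₃, LinearMap.mk₂_apply,
    Algebra.TensorProduct.includeLeft_apply, Algebra.TensorProduct.includeRight_apply,
    Algebra.TensorProduct.map_tmul, AlgHom.coe_id, id_eq, Ring.lie_def,
    Algebra.TensorProduct.tmul_mul_tmul, one_mul, mul_one, sub_tmul, tmul_sub]

variable (R) in
def skewTmul (x y : A) : A ⊗[R] A := x ⊗ₜ y - y ⊗ₜ x

theorem cybeBilin_skewTmul_eq_zero_of_lie_eq_zero {x y x' y' : A} (hxx' : ⁅x, x'⁆ = 0)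
    (hxy' : ⁅x, y'⁆ = 0) (hyx' : ⁅y, x'⁆ = 0) (hyy' : ⁅y, y'⁆ = 0) :
    cybeBilin (skewTmul R x y) (skewTmul R x' y') = 0 := by
  simp only [skewTmul, map_sub, LinearMap.sub_apply, cybeBilin_tmul, hxx', hxy', hyx', hyy',
    zero_tmul, tmul_zero, add_zero, sub_self]

theorem cybeBilin_skewTmul_self_eq_zero_of_lie_eq_smul {h e : A} (c : R) (hhe : ⁅h, e⁆ = c • e) :
    cybeBilin (skewTmul R h e) (skewTmul R h e) = 0 := by
  have heh : ⁅e, h⁆ = -(c • e) := by rw [← lie_skew, hhe]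
  simp only [skewTmul, map_sub, LinearMap.sub_apply, cybeBilin_tmul, hhe, heh, lie_self,
    smul_tmul', tmul_smul, neg_tmul, tmul_neg, zero_tmul, tmul_zero]
  abel

theorem cybeBilin_skewTmul_cross_eq_zero {h e a b : A} (hha : ⁅h, a⁆ = a) (hhb : ⁅h, b⁆ = b)
    (hab : ⁅a, b⁆ = e) (hea : ⁅e, a⁆ = 0) (heb : ⁅e, b⁆ = 0) :
    cybeBilin (skewTmul R h e) (skewTmul R a b) + cybeBilin (skewTmul R a b) (skewTmul R h e) +
      (2 : R) • cybeBilin (skewTmul R a b) (skewTmul R a b) = 0 := by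
  have hah : ⁅a, h⁆ = -a := by rw [← lie_skew, hha]
  have hbh : ⁅b, h⁆ = -b := by rw [← lie_skew, hhb]
  have hba : ⁅b, a⁆ = -e := by rw [← lie_skew, hab]
  have hae : ⁅a, e⁆ = 0 := by rw [← lie_skew, hea, neg_zero]
  have hbe : ⁅b, e⁆ = 0 := by rw [← lie_skew, heb, neg_zero]
  simp only [skewTmul, map_sub, LinearMap.sub_apply, cybeBilin_tmul, hha, hhb, hab, hea, heb,
    hah, hbh, hba, hae, hbe, lie_self, neg_tmul, tmul_neg, zero_tmul, tmul_zero, two_smul]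
  abel

variable (R) in
def jordanianR (S : Finset κ) (h e : A) (a b : κ → A) : A ⊗[R] A :=
  skewTmul R h e + (2 : R) • ∑ k ∈ S, skewTmul R (a k) (b k)

theorem _root_.IsJordanianFamily.cybeBilin_jordanianR_self_eq_zero {S : Finset κ} {h e : A}
    {a b : κ → A} (hJ : IsJordanianFamily S h e a b) :
    cybeBilin (jordanianR R S h e a b) (jordanianR R S h e a b) = 0 := by
  let w₀ := skewTmul R h e
  let w : κ → A ⊗[R] A := fun k => skewTmul R (a k) (b k)
  have hw₀ : cybeBilin w₀ w₀ = 0 :=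
    cybeBilin_skewTmul_self_eq_zero_of_lie_eq_smul (2 : R) (by rw [hJ.lie_h_e, two_smul, two_smul])
  have hcross (k) (hk : k ∈ S) :
      cybeBilin w₀ (w k) + cybeBilin (w k) w₀ + (2 : R) • cybeBilin (w k) (w k) = 0 :=
    cybeBilin_skewTmul_cross_eq_zero (hJ.lie_h_a k hk) (hJ.lie_h_b k hk) (hJ.lie_a_b_self k hk)
      (hJ.lie_e_a k hk) (hJ.lie_e_b k hk)
  have hoff (k) (hk : k ∈ S) (l) (hl : l ∈ S) (hkl : k ≠ l) : cybeBilin (w k) (w l) = 0 := by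
    have hba : ⁅b k, a l⁆ = 0 := by rw [← lie_skew, hJ.lie_a_b_of_ne l hl k hk hkl.symm, neg_zero]
    exact cybeBilin_skewTmul_eq_zero_of_lie_eq_zero (hJ.lie_a_a k hk l hl)
      (hJ.lie_a_b_of_ne k hk l hl hkl) hba (hJ.lie_b_b k hk l hl)
  have hdiag : cybeBilin (∑ k ∈ S, w k) (∑ l ∈ S, w l) = ∑ k ∈ S, cybeBilin (w k) (w k) := by
    simp only [map_sum, LinearMap.sum_apply]
    exact Finset.sum_congr rfl fun l hl =>
      Finset.sum_eq_single_of_mem l hl fun k hk hkl => hoff k hk l hl hkl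
  calc cybeBilin (jordanianR R S h e a b) (jordanianR R S h e a b)
      = cybeBilin w₀ w₀ + (2 : R) • (cybeBilin w₀ (∑ k ∈ S, w k) + cybeBilin (∑ k ∈ S, w k) w₀ +
          (2 : R) • cybeBilin (∑ k ∈ S, w k) (∑ l ∈ S, w l)) := by
        simp only [jordanianR, map_add, map_smul, LinearMap.add_apply, LinearMap.smul_apply,
          smul_add]
        abel
    _ = (2 : R) • ∑ k ∈ S, (cybeBilin w₀ (w k) + cybeBilin (w k) w₀ +
          (2 : R) • cybeBilin (w k) (w k)) := by
        rw [hw₀, hdiag, zero_add]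
        simp only [map_sum, LinearMap.sum_apply, Finset.sum_add_distrib, Finset.smul_sum]
    _ = 0 := by rw [Finset.sum_eq_zero hcross, smul_zero]

end TensorProduct

namespace Matrix

variable {n R : Type*} [DecidableEq n] [Fintype n] [CommRing R]

theorem lie_single_single (i j k l : n) :
    ⁅single i j (1 : R), single k l (1 : R)⁆ =
      (if j = k then single i l 1 else 0) - if l = i then single k j 1 else 0 := by
  rw [Ring.lie_def]
  congr 1 <;> split_ifs with h
  · subst h; simp
  · exact single_mul_single_of_ne (h := h) ..
  · subst h; simp
  · exact single_mul_single_of_ne (h := h) ..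

theorem isJordanianFamily_single {i j : n} (hij : i ≠ j) (S : Finset n)
    (hS : ∀ k ∈ S, i ≠ k ∧ j ≠ k) :
    IsJordanianFamily S (single i i (1 : R) - single j j 1) (single i j 1)
      (fun k => single i k 1) (fun k => single k j 1) where
  lie_h_e := by
    simp only [sub_lie, lie_single_single, hij.symm, if_true, if_false]
    abel
  lie_h_a k hk := by
    obtain ⟨hik, hjk⟩ := hS k hk
    simp only [sub_lie, lie_single_single, hij.symm, hik.symm, hjk.symm, if_true, if_false]
    abel
  lie_h_b k hk := by
    obtain ⟨hik, hjk⟩ := hS k hk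
    simp only [sub_lie, lie_single_single, hij.symm, hik, hjk, if_true, if_false]
    abel
  lie_e_a k hk := by simp [lie_single_single, hij.symm, (hS k hk).1.symm]
  lie_e_b k hk := by simp [lie_single_single, hij.symm, (hS k hk).2]
  lie_a_b_self k hk := by simp [lie_single_single, hij.symm]
  lie_a_b_of_ne k hk l hl hkl := by simp [lie_single_single, hkl, hij.symm]
  lie_a_a k hk l hl := by simp [lie_single_single, (hS k hk).1.symm, (hS l hl).1.symm]
  lie_b_b k hk l hl := by simp [lie_single_single, (hS k hk).2, (hS l hl).2]

end Matrix

theorem glN_jordanian_r_matrix_CYBE (hN : 2 ≤ N) :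
    let E : Fin N → Fin N → glN N := fun i j => Matrix.single i j 1
    let one : Fin N := ⟨0, by omega⟩          -- the index "1" (0-based: 0)
    let last : Fin N := ⟨N - 1, by omega⟩     -- the index "N" (0-based: N-1)
    let H1N : glN N := E one one - E last last
    let r : UN N ⊗[ℚ] UN N :=
      wedge N H1N (E one last) +
      (2 : ℚ) • ∑ k ∈ Finset.univ.filter (fun k : Fin N => 0 < (k : ℕ) ∧ (k : ℕ) < N - 1),
        wedge N (E one k) (E k last)
    ⁅p12 N r, p13 N r⁆ + ⁅p12 N r, p23 N r⁆ + ⁅p13 N r, p23 N r⁆ = 0 := by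
  intro E one last H1N r
  have hS : ∀ k ∈ Finset.univ.filter (fun k : Fin N => 0 < (k : ℕ) ∧ (k : ℕ) < N - 1),
      one ≠ k ∧ last ≠ k := by
    intro k hk
    simp only [Finset.mem_filter, Finset.mem_univ, true_and] at hk
    constructor <;> intro h <;> simp only [one, last, Fin.ext_iff] at h <;> omega
  have hJ := (Matrix.isJordanianFamily_single (R := ℚ) (i := one) (j := last)
    (by simp only [one, last, ne_eq, Fin.ext_iff]; omega) _ hS).map
    (UniversalEnvelopingAlgebra.ι ℚ)
  show TensorProduct.cybeBilin r r = 0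
  exact hJ.cybeBilin_jordanianR_self_eq_zero
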